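/- arXiv:2310.14286 — 2 statements merged into one kernel-verified Lean document; each statement's English description precedes it below -/
import Mathlib

section
/- For every integer p ≥ 1 and every step size α ∈ (0, (1−γ)/(64p)], it holds in the Loewner order that E[((I − αA)ᵀ (I − αA))^p] ≼ I − (1/2) · α p (1−γ) · Σ, where I is the d×d identity matrix and A = X (X − γY)ᵀ. -/
open MeasureTheory ProbabilityTheory Matrix
noncomputable section

/-- Euclidean norm of a vector in `ℝ^d`. -/
def euclNorm {d : ℕ} (u : Fin d → ℝ) : ℝ := Real.sqrt (∑ i, u i ^ 2)

/-- Entrywise expectation of a random matrix. -/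
def matExp {d : ℕ} {Ω : Type*} [MeasurableSpace Ω] (P : Measure Ω)
    (M : Ω → Matrix (Fin d) (Fin d) ℝ) : Matrix (Fin d) (Fin d) ℝ :=
  Matrix.of fun i j => ∫ ω, M ω i j ∂P

/-!
Write `(I - αA)ᵀ (I - αA) = I + D` with `D` symmetric. Since `‖X‖, ‖Y‖ ≤ 1` and `α ≤ 1/4`, the
quadratic form of `D` is bounded by `5α`, so `p |t| ≤ 1` on the spectrum of `D` and the scalar inequality
`(1 + t)^p ≤ 1 + p t + p² t²` lifts, by the continuous functional calculus, to
`(I + D)^p ≼ I + p D + p² D²`. Testing against a vector `x` and writing `a = Xᵀx`, `b = Yᵀx`, the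
right-hand side is at most `‖x‖² - 2αp a² + K (a² + b²)` with `K = αγp + 2α²p + 22p²α²`.
Taking expectations, `E[Y Yᵀ] = E[X Xᵀ] = Σ` because `X` and `Y` have the same law, and the
step-size condition `64αp ≤ 1 - γ` gives `2αp - 2K ≥ αp(1 - γ)/2`.
-/

open scoped MatrixOrder

lemma one_add_pow_le (t : ℝ) : ∀ p : ℕ, (p : ℝ) * |t| ≤ 1 →
    (1 + t) ^ p ≤ 1 + p * t + p ^ 2 * t ^ 2
  | 0, _ => by simp
  | p + 1, h => by
    push_cast at h ⊢
    have hp : (p : ℝ) * |t| ≤ 1 := by nlinarith [abs_nonneg t]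
    have ht : |t| ≤ 1 := by nlinarith [abs_nonneg t, (p.cast_nonneg : (0 : ℝ) ≤ p)]
    have h1t : 0 ≤ 1 + t := by linarith [neg_abs_le t]
    have hpt : (p : ℝ) ^ 2 * t ≤ p + 1 := by
      nlinarith [le_abs_self t, (p.cast_nonneg : (0 : ℝ) ≤ p)]
    calc (1 + t) ^ (p + 1) = (1 + t) ^ p * (1 + t) := pow_succ _ _
      _ ≤ (1 + p * t + p ^ 2 * t ^ 2) * (1 + t) :=
        mul_le_mul_of_nonneg_right (one_add_pow_le t p hp) h1t
      _ ≤ 1 + (p + 1) * t + (p + 1) ^ 2 * t ^ 2 := by nlinarith [sq_nonneg t]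

section

variable {n : Type*} [Fintype n]

lemma dotProduct_mulVec_eq_sum (A : Matrix n n ℝ) (x : n → ℝ) :
    x ⬝ᵥ A *ᵥ x = ∑ i, ∑ j, x i * A i j * x j := by
  simp only [dotProduct, mulVec, Finset.mul_sum, mul_comm, mul_left_comm]

lemma dotProduct_sq_le_dotProduct_self_mul (a b : n → ℝ) :
    (a ⬝ᵥ b) ^ 2 ≤ (a ⬝ᵥ a) * (b ⬝ᵥ b) := by
  simpa [dotProduct, pow_two] using Finset.sum_mul_sq_le_sq_mul_sq Finset.univ a b

lemma dotProduct_sub_self_le (a b : n → ℝ) :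
    (a - b) ⬝ᵥ (a - b) ≤ 2 * (a ⬝ᵥ a) + 2 * (b ⬝ᵥ b) := by
  have h : 0 ≤ (a + b) ⬝ᵥ (a + b) := by simpa using dotProduct_star_self_nonneg (a + b)
  simp only [add_dotProduct, dotProduct_add, sub_dotProduct, dotProduct_sub,
    dotProduct_comm b a] at h ⊢
  linarith

lemma norm_le_one_of_dotProduct_self_le_one {u : n → ℝ} (h : u ⬝ᵥ u ≤ 1) : ‖u‖ ≤ 1 :=
  (pi_norm_le_iff_of_nonneg zero_le_one).mpr fun i => by
    rw [Real.norm_eq_abs, abs_le_one_iff_mul_self_le_one]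
    exact (Finset.single_le_sum (fun j _ => mul_self_nonneg (u j)) (Finset.mem_univ i)).trans h

lemma posSemidef_vecMulVec_self (a : n → ℝ) : (vecMulVec a a).PosSemidef := by
  simpa using posSemidef_vecMulVec_self_star a

lemma dotProduct_vecMulVec_self_mulVec (a x : n → ℝ) :
    x ⬝ᵥ vecMulVec a a *ᵥ x = (a ⬝ᵥ x) ^ 2 := by
  simp [vecMulVec_mulVec, dotProduct_comm x a, pow_two]

lemma dotProduct_mul_self_mulVec {A : Matrix n n ℝ} (hA : A.IsHermitian) (x : n → ℝ) :
    x ⬝ᵥ (A * A) *ᵥ x = (A *ᵥ x) ⬝ᵥ (A *ᵥ x) := by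
  rw [← mulVec_mulVec, dotProduct_mulVec, ← vecMul_transpose,
    ← conjTranspose_eq_transpose_of_trivial, hA]

namespace Matrix

lemma le_of_forall_dotProduct_mulVec_le {A B : Matrix n n ℝ} (hA : A.IsHermitian)
    (hB : B.IsHermitian) (h : ∀ x, x ⬝ᵥ A *ᵥ x ≤ x ⬝ᵥ B *ᵥ x) : A ≤ B :=
  le_iff.mpr <| .of_dotProduct_mulVec_nonneg (hB.sub hA) fun x => by
    simpa [sub_mulVec, dotProduct_sub] using h x

variable [DecidableEq n]

lemma abs_le_of_mem_spectrum {D : Matrix n n ℝ} (hD : D.IsHermitian) {c : ℝ}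
    (h : ∀ x, |x ⬝ᵥ D *ᵥ x| ≤ c * (x ⬝ᵥ x)) {t : ℝ} (ht : t ∈ spectrum ℝ D) : |t| ≤ c := by
  have hc (r : ℝ) : (algebraMap ℝ (Matrix n n ℝ) r).IsHermitian := isHermitian_diagonal _
  have hquad (r : ℝ) (x : n → ℝ) :
      x ⬝ᵥ algebraMap ℝ (Matrix n n ℝ) r *ᵥ x = r * (x ⬝ᵥ x) := by
    simp [Algebra.algebraMap_eq_smul_one, smul_mulVec, dotProduct_smul]
  have hle : D ≤ algebraMap ℝ _ c := le_of_forall_dotProduct_mulVec_le hD (hc c) fun x =>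
    (hquad c x).symm ▸ (le_abs_self _).trans (h x)
  have hge : algebraMap ℝ _ (-c) ≤ D :=
    le_of_forall_dotProduct_mulVec_le (hc (-c)) hD fun x => by
      rw [hquad, neg_mul]
      exact (neg_le_neg (h x)).trans (neg_abs_le _)
  exact abs_le.mpr ⟨(algebraMap_le_iff_le_spectrum (ha := hD)).mp hge t ht,
    (le_algebraMap_iff_spectrum_le (ha := hD)).mp hle t ht⟩

lemma one_add_pow_le {D : Matrix n n ℝ} (hD : D.IsHermitian) {p : ℕ}
    (hspec : ∀ t ∈ spectrum ℝ D, (p : ℝ) * |t| ≤ 1) :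
    (1 + D) ^ p ≤ 1 + (p : ℝ) • D + ((p : ℝ) ^ 2) • D ^ 2 := by
  have hD' : IsSelfAdjoint D := hD
  have hmono := cfc_mono (a := D) (f := fun t : ℝ => (1 + t) ^ p)
    (g := fun t => 1 + p * t + p ^ 2 * t ^ 2) fun t ht => _root_.one_add_pow_le t p (hspec t ht)
  rwa [cfc_pow (fun t : ℝ => 1 + t) p D, cfc_add D (fun _ : ℝ => 1) (fun t => t),
    cfc_add D (fun t : ℝ => 1 + p * t) (fun t => p ^ 2 * t ^ 2),
    cfc_add D (fun _ : ℝ => 1) (fun t => p * t), cfc_const_one ℝ D,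
    cfc_const_mul (p : ℝ) (fun t => t) D, cfc_const_mul ((p : ℝ) ^ 2) (fun t => t ^ 2) D,
    cfc_pow (fun t : ℝ => t) 2 D, cfc_id' ℝ D] at hmono

end Matrix

variable {α γ : ℝ} {u v y : n → ℝ}

lemma sq_dotProduct_sub_smul_le (hγ0 : 0 ≤ γ) (hγ1 : γ ≤ 1) (x : n → ℝ) :
    ((u - γ • y) ⬝ᵥ x) ^ 2 ≤ 2 * ((u ⬝ᵥ x) ^ 2 + (y ⬝ᵥ x) ^ 2) := by
  rw [sub_dotProduct, smul_dotProduct, smul_eq_mul]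
  nlinarith [sq_nonneg (u ⬝ᵥ x + γ * (y ⬝ᵥ x)), mul_le_mul_of_nonneg_right
    (show γ ^ 2 ≤ 1 by nlinarith) (sq_nonneg (y ⬝ᵥ x))]

lemma dotProduct_sub_smul_self_le (hγ0 : 0 ≤ γ) (hγ1 : γ ≤ 1) (hu : u ⬝ᵥ u ≤ 1)
    (hy : y ⬝ᵥ y ≤ 1) : (u - γ • y) ⬝ᵥ (u - γ • y) ≤ 4 := by
  have h := dotProduct_sub_self_le u (γ • y)
  rw [smul_dotProduct, dotProduct_smul, smul_eq_mul, smul_eq_mul] at h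
  nlinarith [mul_le_mul hγ1 hγ1 hγ0 zero_le_one]

variable [DecidableEq n]

def gramDefect (α : ℝ) (u v : n → ℝ) : Matrix n n ℝ :=
  (1 - α • vecMulVec u v)ᵀ * (1 - α • vecMulVec u v) - 1

lemma isHermitian_gramDefect : (gramDefect α u v).IsHermitian := by
  simp [gramDefect, IsHermitian, conjTranspose_eq_transpose_of_trivial, transpose_mul]

lemma gramDefect_mulVec (z : n → ℝ) : gramDefect α u v *ᵥ z =
    (α * (α * (u ⬝ᵥ u) * (v ⬝ᵥ z) - u ⬝ᵥ z)) • v - (α * (v ⬝ᵥ z)) • u := by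
  simp only [gramDefect, sub_mulVec, ← mulVec_mulVec, transpose_sub, transpose_smul,
    transpose_one, transpose_vecMulVec, one_mulVec, smul_mulVec, vecMulVec_mulVec]
  ext i
  simp [dotProduct_sub, dotProduct_smul]
  ring

lemma dotProduct_gramDefect_mulVec (z : n → ℝ) : z ⬝ᵥ gramDefect α u v *ᵥ z =
    α ^ 2 * (u ⬝ᵥ u) * (v ⬝ᵥ z) ^ 2 - 2 * α * (u ⬝ᵥ z) * (v ⬝ᵥ z) := by
  rw [gramDefect_mulVec, dotProduct_comm]
  simp only [sub_dotProduct, smul_dotProduct, smul_eq_mul]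
  ring

lemma abs_dotProduct_gramDefect_mulVec_le (hα : 0 ≤ α) (hα4 : 4 * α ≤ 1)
    (hu : u ⬝ᵥ u ≤ 1) (hv : v ⬝ᵥ v ≤ 4) (z : n → ℝ) :
    |z ⬝ᵥ gramDefect α u v *ᵥ z| ≤ 5 * α * (z ⬝ᵥ z) := by
  have hz : 0 ≤ z ⬝ᵥ z := by simpa using dotProduct_star_self_nonneg z
  have hs : 0 ≤ u ⬝ᵥ u := by simpa using dotProduct_star_self_nonneg u
  have huz : (u ⬝ᵥ z) ^ 2 ≤ z ⬝ᵥ z := by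
    nlinarith [dotProduct_sq_le_dotProduct_self_mul u z]
  have hvz : (v ⬝ᵥ z) ^ 2 ≤ 4 * (z ⬝ᵥ z) := by
    nlinarith [dotProduct_sq_le_dotProduct_self_mul v z]
  have hsq : α ^ 2 * (u ⬝ᵥ u) * (v ⬝ᵥ z) ^ 2 ≤ α * (z ⬝ᵥ z) := by
    have : (u ⬝ᵥ u) * (v ⬝ᵥ z) ^ 2 ≤ 4 * (z ⬝ᵥ z) := by nlinarith [sq_nonneg (v ⬝ᵥ z)]
    nlinarith [mul_le_mul_of_nonneg_left this (sq_nonneg α),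
      mul_nonneg (mul_nonneg hα hz) (sub_nonneg.mpr hα4)]
  -- AM-GM: `2 |a b| ≤ 2 a² + b² / 2`
  have hcross : |2 * α * (u ⬝ᵥ z) * (v ⬝ᵥ z)| ≤ 4 * α * (z ⬝ᵥ z) := by
    rw [abs_le]
    constructor <;> nlinarith [mul_nonneg hα (sq_nonneg (2 * (u ⬝ᵥ z) + (v ⬝ᵥ z))),
      mul_nonneg hα (sq_nonneg (2 * (u ⬝ᵥ z) - (v ⬝ᵥ z)))]
  rw [dotProduct_gramDefect_mulVec, abs_le]
  constructor <;> nlinarith [abs_le.mp hcross,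
    mul_nonneg (sq_nonneg α) (mul_nonneg hs (sq_nonneg (v ⬝ᵥ z)))]

lemma gramDefect_mulVec_dotProduct_self_le (hα : 0 ≤ α) (hα4 : 4 * α ≤ 1)
    (hu : u ⬝ᵥ u ≤ 1) (hv : v ⬝ᵥ v ≤ 4) (z : n → ℝ) :
    (gramDefect α u v *ᵥ z) ⬝ᵥ (gramDefect α u v *ᵥ z)
      ≤ 16 * α ^ 2 * (u ⬝ᵥ z) ^ 2 + 3 * α ^ 2 * (v ⬝ᵥ z) ^ 2 := by
  have hs : 0 ≤ u ⬝ᵥ u := by simpa using dotProduct_star_self_nonneg u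
  have hsmul (c : ℝ) (a : n → ℝ) : (c • a) ⬝ᵥ (c • a) = c ^ 2 * (a ⬝ᵥ a) := by
    simp only [smul_dotProduct, dotProduct_smul, smul_eq_mul]; ring
  have h := dotProduct_sub_self_le ((α * (α * (u ⬝ᵥ u) * (v ⬝ᵥ z) - u ⬝ᵥ z)) • v)
    ((α * (v ⬝ᵥ z)) • u)
  rw [hsmul, hsmul, ← gramDefect_mulVec] at h
  refine h.trans ?_
  set a := u ⬝ᵥ z
  set w := v ⬝ᵥ z
  have hs1 : (u ⬝ᵥ u) ^ 2 ≤ 1 := by nlinarith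
  have hdiff : (α * (u ⬝ᵥ u) * w - a) ^ 2 ≤ 2 * α ^ 2 * w ^ 2 + 2 * a ^ 2 := by
    nlinarith [sq_nonneg (α * (u ⬝ᵥ u) * w + a),
      mul_le_mul_of_nonneg_left hs1 (sq_nonneg (α * w))]
  have hα2 : 16 * α ^ 2 ≤ 1 := by nlinarith
  nlinarith [mul_le_mul_of_nonneg_left hdiff (sq_nonneg α), sq_nonneg (α * (u ⬝ᵥ u) * w - a),
    mul_le_mul_of_nonneg_left hα2 (sq_nonneg (α * w)), mul_nonneg (sq_nonneg (α * w)) hs]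

lemma dotProduct_gramDefect_mulVec_le (hα : 0 ≤ α) (hγ0 : 0 ≤ γ) (hγ1 : γ ≤ 1)
    (hu : u ⬝ᵥ u ≤ 1) (x : n → ℝ) :
    x ⬝ᵥ gramDefect α u (u - γ • y) *ᵥ x
      ≤ -2 * α * (u ⬝ᵥ x) ^ 2 + (α * γ + 2 * α ^ 2) * ((u ⬝ᵥ x) ^ 2 + (y ⬝ᵥ x) ^ 2) := by
  have hw := sq_dotProduct_sub_smul_le (u := u) (y := y) hγ0 hγ1 x
  have hsq : α ^ 2 * (u ⬝ᵥ u) * ((u - γ • y) ⬝ᵥ x) ^ 2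
      ≤ 2 * α ^ 2 * ((u ⬝ᵥ x) ^ 2 + (y ⬝ᵥ x) ^ 2) := by
    have := mul_le_mul hu hw (sq_nonneg _) zero_le_one
    nlinarith [mul_le_mul_of_nonneg_left this (sq_nonneg α)]
  rw [dotProduct_gramDefect_mulVec]
  rw [sub_dotProduct (u := u), smul_dotProduct, smul_eq_mul] at hsq ⊢
  nlinarith [mul_nonneg (mul_nonneg hα hγ0) (sq_nonneg (u ⬝ᵥ x - y ⬝ᵥ x))]

lemma gram_one_sub_smul_vecMulVec_pow_le (hγ0 : 0 ≤ γ) (hγ1 : γ ≤ 1) (hα : 0 ≤ α)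
    (hα4 : 4 * α ≤ 1) (hu : u ⬝ᵥ u ≤ 1) (hy : y ⬝ᵥ y ≤ 1) {p : ℕ} (hpα : 5 * α * p ≤ 1) :
    ((1 - α • vecMulVec u (u - γ • y))ᵀ * (1 - α • vecMulVec u (u - γ • y))) ^ p
      ≤ 1 - (2 * α * p) • vecMulVec u u
        + (α * γ * p + 2 * α ^ 2 * p + 22 * p ^ 2 * α ^ 2) • (vecMulVec u u + vecMulVec y y) := by
  set D := gramDefect α u (u - γ • y)
  have hD : D.IsHermitian := isHermitian_gramDefect
  have hv := dotProduct_sub_smul_self_le hγ0 hγ1 hu hy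
  have hspec (t : ℝ) (ht : t ∈ spectrum ℝ D) : (p : ℝ) * |t| ≤ 1 := by
    have := abs_le_of_mem_spectrum hD (abs_dotProduct_gramDefect_mulVec_le hα hα4 hu hv) ht
    nlinarith [abs_nonneg t, (p.cast_nonneg : (0 : ℝ) ≤ p)]
  rw [← add_sub_cancel (1 : Matrix n n ℝ) (_ᵀ * _)]
  refine (one_add_pow_le hD hspec).trans (le_of_forall_dotProduct_mulVec_le ?_ ?_ fun x => ?_)
  · exact (isHermitian_one.add (hD.smul (.all _))).add ((hD.pow 2).smul (.all _))
  · exact (isHermitian_one.sub ((posSemidef_vecMulVec_self u).isHermitian.smul (.all _))).add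
      (((posSemidef_vecMulVec_self u).isHermitian.add
        (posSemidef_vecMulVec_self y).isHermitian).smul (.all _))
  · have hxDx : x ⬝ᵥ D *ᵥ x ≤ -2 * α * (u ⬝ᵥ x) ^ 2
        + (α * γ + 2 * α ^ 2) * ((u ⬝ᵥ x) ^ 2 + (y ⬝ᵥ x) ^ 2) :=
      dotProduct_gramDefect_mulVec_le hα hγ0 hγ1 hu x
    have hDx : (D *ᵥ x) ⬝ᵥ (D *ᵥ x) ≤ 22 * α ^ 2 * ((u ⬝ᵥ x) ^ 2 + (y ⬝ᵥ x) ^ 2) := by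
      nlinarith [gramDefect_mulVec_dotProduct_self_le hα hα4 hu hv x,
        sq_dotProduct_sub_smul_le (u := u) (y := y) hγ0 hγ1 x, sq_nonneg (y ⬝ᵥ x)]
    simp only [add_mulVec, sub_mulVec, smul_mulVec, one_mulVec, dotProduct_add, dotProduct_sub,
      dotProduct_smul, smul_eq_mul, pow_two D, dotProduct_mul_self_mulVec hD,
      dotProduct_vecMulVec_self_mulVec]
    nlinarith [mul_le_mul_of_nonneg_left hxDx p.cast_nonneg,
      mul_le_mul_of_nonneg_left hDx (sq_nonneg (p : ℝ))]

end

lemma MeasureTheory.integrable_comp_of_ae_mem_isCompact {Ω E : Type*} [MeasurableSpace Ω]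
    {P : Measure Ω} [IsFiniteMeasure P] [TopologicalSpace E] [MeasurableSpace E]
    [OpensMeasurableSpace E] {K : Set E} (hK : IsCompact K) {F : E → ℝ} (hF : Continuous F)
    {Z : Ω → E} (hZ : Measurable Z) (hZK : ∀ᵐ ω ∂P, Z ω ∈ K) :
    Integrable (fun ω => F (Z ω)) P := by
  obtain ⟨C, hC⟩ := hK.exists_bound_of_continuousOn hF.continuousOn
  exact .of_bound (hF.measurable.comp hZ).aestronglyMeasurable C (hZK.mono fun ω hω => hC _ hω)

lemma dotProduct_self_le_one_of_euclNorm_le_one {d : ℕ} {u : Fin d → ℝ} (h : euclNorm u ≤ 1) :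
    u ⬝ᵥ u ≤ 1 := by
  simpa [euclNorm, dotProduct, pow_two] using Real.sqrt_le_one.mp h

section

variable {d : ℕ} {Ω : Type*} [MeasurableSpace Ω] {P : Measure Ω}
  {M N : Ω → Matrix (Fin d) (Fin d) ℝ}

lemma dotProduct_matExp_mulVec (hM : ∀ i j, Integrable (fun ω => M ω i j) P) (x : Fin d → ℝ) :
    x ⬝ᵥ matExp P M *ᵥ x = ∫ ω, x ⬝ᵥ M ω *ᵥ x ∂P := by
  have hint (i j : Fin d) : Integrable (fun ω => x i * M ω i j * x j) P :=
    ((hM i j).const_mul _).mul_const _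
  simp only [dotProduct_mulVec_eq_sum]
  rw [integral_finsetSum _ fun i _ => integrable_finsetSum _ fun j _ => hint i j]
  refine Finset.sum_congr rfl fun i _ => ?_
  rw [integral_finsetSum _ fun j _ => hint i j]
  refine Finset.sum_congr rfl fun j _ => ?_
  rw [integral_mul_const, integral_const_mul]
  rfl

lemma posSemidef_matExp (hM : ∀ i j, Integrable (fun ω => M ω i j) P)
    (hpos : ∀ᵐ ω ∂P, (M ω).PosSemidef) : (matExp P M).PosSemidef := by
  refine .of_dotProduct_mulVec_nonneg ?_ fun x => ?_
  · ext i j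
    exact integral_congr_ae (hpos.mono fun ω hω => hω.isHermitian.apply i j)
  · rw [star_trivial, dotProduct_matExp_mulVec hM]
    exact integral_nonneg_of_ae (hpos.mono fun ω hω => by
      simpa using hω.dotProduct_mulVec_nonneg x)

lemma matExp_sub (hM : ∀ i j, Integrable (fun ω => M ω i j) P)
    (hN : ∀ i j, Integrable (fun ω => N ω i j) P) :
    matExp P (fun ω => M ω - N ω) = matExp P M - matExp P N := by
  ext i j
  exact integral_sub (hM i j) (hN i j)

lemma matExp_add (hM : ∀ i j, Integrable (fun ω => M ω i j) P)
    (hN : ∀ i j, Integrable (fun ω => N ω i j) P) :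
    matExp P (fun ω => M ω + N ω) = matExp P M + matExp P N := by
  ext i j
  exact integral_add (hM i j) (hN i j)

lemma matExp_one_sub_smul_add_smul [IsProbabilityMeasure P]
    (hM : ∀ i j, Integrable (fun ω => M ω i j) P) (hN : ∀ i j, Integrable (fun ω => N ω i j) P)
    (a b : ℝ) :
    matExp P (fun ω => 1 - a • M ω + b • N ω) = 1 - a • matExp P M + b • matExp P N := by
  ext i j
  have hM' : Integrable (fun ω => (1 : Matrix (Fin d) (Fin d) ℝ) i j - a * M ω i j) P :=
    (integrable_const _).sub ((hM i j).const_mul a)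
  simp only [matExp, of_apply, Matrix.add_apply, Matrix.sub_apply, Matrix.smul_apply, smul_eq_mul]
  rw [integral_add hM' ((hN i j).const_mul b),
    integral_sub (integrable_const _) ((hM i j).const_mul a), integral_const_mul,
    integral_const_mul, integral_const, probReal_univ, one_smul]

lemma matExp_mono (hM : ∀ i j, Integrable (fun ω => M ω i j) P)
    (hN : ∀ i j, Integrable (fun ω => N ω i j) P) (h : ∀ᵐ ω ∂P, M ω ≤ N ω) :
    matExp P M ≤ matExp P N := by
  rw [le_iff, ← matExp_sub hN hM]
  exact posSemidef_matExp (fun i j => (hN i j).sub (hM i j)) (h.mono fun ω => le_iff.mp)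

lemma ProbabilityTheory.IdentDistrib.matExp_comp_eq {E : Type*} [MeasurableSpace E]
    {X Y : Ω → E} (hXY : IdentDistrib X Y P P) {f : E → Matrix (Fin d) (Fin d) ℝ}
    (hf : ∀ i j, Measurable fun z => f z i j) :
    matExp P (fun ω => f (X ω)) = matExp P (fun ω => f (Y ω)) := by
  ext i j
  exact (hXY.comp (hf i j)).integral_eq

variable [IsProbabilityMeasure P] {X Y : Ω → Fin d → ℝ}

lemma integrable_comp_of_euclNorm_le_one (hXm : Measurable X) (hYm : Measurable Y)
    (hX1 : ∀ᵐ ω ∂P, euclNorm (X ω) ≤ 1) (hY1 : ∀ᵐ ω ∂P, euclNorm (Y ω) ≤ 1)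
    (F : (Fin d → ℝ) × (Fin d → ℝ) → ℝ) (hF : Continuous F) :
    Integrable (fun ω => F (X ω, Y ω)) P := by
  refine integrable_comp_of_ae_mem_isCompact (isCompact_closedBall 0 1) hF (hXm.prodMk hYm) ?_
  filter_upwards [hX1, hY1] with ω hx hy
  rw [mem_closedBall_zero_iff, norm_prod_le_iff]
  exact ⟨norm_le_one_of_dotProduct_self_le_one (dotProduct_self_le_one_of_euclNorm_le_one hx),
    norm_le_one_of_dotProduct_self_le_one (dotProduct_self_le_one_of_euclNorm_le_one hy)⟩

lemma matExp_gram_one_sub_smul_vecMulVec_pow_le (hXm : Measurable X) (hYm : Measurable Y)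
    (hX1 : ∀ᵐ ω ∂P, euclNorm (X ω) ≤ 1) (hY1 : ∀ᵐ ω ∂P, euclNorm (Y ω) ≤ 1)
    {γ α : ℝ} (hγ0 : 0 ≤ γ) (hγ1 : γ ≤ 1) (hα : 0 ≤ α) (hα4 : 4 * α ≤ 1) {p : ℕ}
    (hpα : 5 * α * p ≤ 1) :
    matExp P (fun ω => ((1 - α • vecMulVec (X ω) (X ω - γ • Y ω))ᵀ
        * (1 - α • vecMulVec (X ω) (X ω - γ • Y ω))) ^ p)
      ≤ 1 - (2 * α * p) • matExp P (fun ω => vecMulVec (X ω) (X ω))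
        + (α * γ * p + 2 * α ^ 2 * p + 22 * p ^ 2 * α ^ 2)
          • (matExp P (fun ω => vecMulVec (X ω) (X ω))
            + matExp P (fun ω => vecMulVec (Y ω) (Y ω))) := by
  have hint := integrable_comp_of_euclNorm_le_one (P := P) hXm hYm hX1 hY1
  have hXX (i j : Fin d) : Integrable (fun ω => vecMulVec (X ω) (X ω) i j) P :=
    hint (fun z => vecMulVec z.1 z.1 i j) (by fun_prop)
  have hYY (i j : Fin d) : Integrable (fun ω => vecMulVec (Y ω) (Y ω) i j) P :=
    hint (fun z => vecMulVec z.2 z.2 i j) (by fun_prop)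
  rw [← matExp_add hXX hYY, ← matExp_one_sub_smul_add_smul
    (N := fun ω => vecMulVec (X ω) (X ω) + vecMulVec (Y ω) (Y ω)) hXX
    fun i j => (hXX i j).add (hYY i j)]
  refine matExp_mono
    (fun i j => hint (fun z => (((1 - α • vecMulVec z.1 (z.1 - γ • z.2))ᵀ
      * (1 - α • vecMulVec z.1 (z.1 - γ • z.2))) ^ p : Matrix (Fin d) (Fin d) ℝ) i j)
      (by fun_prop))
    (fun i j => hint (fun z => (1 - (2 * α * p) • vecMulVec z.1 z.1
      + _ • (vecMulVec z.1 z.1 + vecMulVec z.2 z.2) : Matrix (Fin d) (Fin d) ℝ) i j)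
      (by fun_prop)) ?_
  filter_upwards [hX1, hY1] with ω hx hy
  exact gram_one_sub_smul_vecMulVec_pow_le hγ0 hγ1 hα hα4
    (dotProduct_self_le_one_of_euclNorm_le_one hx) (dotProduct_self_le_one_of_euclNorm_le_one hy)
    hpα

end

theorem stmt5_general {d : ℕ} (γ : ℝ) (hγ : γ ∈ Set.Ico (0 : ℝ) 1)
    {Ω : Type*} [MeasurableSpace Ω] (P : Measure Ω) [IsProbabilityMeasure P]
    (X Y : Ω → Fin d → ℝ) (hXm : Measurable X) (hYm : Measurable Y)
    (hX1 : ∀ᵐ ω ∂P, euclNorm (X ω) ≤ 1) (hY1 : ∀ᵐ ω ∂P, euclNorm (Y ω) ≤ 1)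
    (hXY : IdentDistrib X Y P P)
    (p : ℕ)
    (α : ℝ) (hα : α ∈ Set.Ioc 0 ((1 - γ) / (64 * p))) :
    ((1 - ((1 / 2 : ℝ) * α * p * (1 - γ)) • matExp P (fun ω => vecMulVec (X ω) (X ω)))
      - matExp P (fun ω =>
          ((1 - α • vecMulVec (X ω) (X ω - γ • Y ω))ᵀ
            * (1 - α • vecMulVec (X ω) (X ω - γ • Y ω))) ^ p)).PosSemidef := by
  obtain ⟨hα0, hαp⟩ := hα
  obtain ⟨hγ0, hγ1⟩ := hγ
  have hp : (1 : ℝ) ≤ p := by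
    rcases p.eq_zero_or_pos with rfl | hp
    · rw [Nat.cast_zero, mul_zero, div_zero] at hαp
      linarith
    · exact_mod_cast hp
  have h64 : 64 * α * p ≤ 1 - γ := by
    rw [le_div_iff₀ (by positivity)] at hαp
    linarith
  set K := α * γ * p + 2 * α ^ 2 * p + 22 * p ^ 2 * α ^ 2
  set S := matExp P (fun ω => vecMulVec (X ω) (X ω))
  have hYS : matExp P (fun ω => vecMulVec (Y ω) (Y ω)) = S :=
    (hXY.matExp_comp_eq (f := fun v => vecMulVec v v) fun i j => by fun_prop).symm
  have hS : S.PosSemidef := posSemidef_matExp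
    (fun i j => integrable_comp_of_euclNorm_le_one hXm hYm hX1 hY1
      (fun z => vecMulVec z.1 z.1 i j) (by fun_prop))
    (.of_forall fun ω => posSemidef_vecMulVec_self (X ω))
  have hcoef : (1 / 2 : ℝ) * α * p * (1 - γ) ≤ 2 * α * p - 2 * K := by
    have hsmall : 4 * α + 44 * p * α ≤ 3 / 2 * (1 - γ) := by
      nlinarith [mul_le_mul_of_nonneg_left hp hα0.le]
    nlinarith [mul_nonneg (mul_nonneg hα0.le (zero_le_one.trans hp)) (sub_nonneg.mpr hsmall)]
  rw [← le_iff]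
  calc _ ≤ 1 - (2 * α * p) • S + K • (S + matExp P (fun ω => vecMulVec (Y ω) (Y ω))) :=
        matExp_gram_one_sub_smul_vecMulVec_pow_le hXm hYm hX1 hY1 hγ0 hγ1.le hα0.le
          (by nlinarith) (by nlinarith)
    _ = 1 - (2 * α * p - 2 * K) • S := by rw [hYS]; module
    _ ≤ 1 - ((1 / 2 : ℝ) * α * p * (1 - γ)) • S := by
        rw [le_iff, sub_sub_sub_cancel_left, ← sub_smul]
        exact hS.smul (sub_nonneg.mpr hcoef)

/-- For every integer `p ≥ 1` and every step size `α ∈ (0, (1-γ)/(64 p)]`,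
`E[((I - αA)ᵀ (I - αA))^p] ≼ I - (1/2)·αp(1-γ)·Σ` in the Loewner order, where
`A = X (X - γ Y)ᵀ` and `Σ = E[X Xᵀ]`. -/
theorem stmt5 {d : ℕ} (hd : 1 ≤ d) (γ : ℝ) (hγ : γ ∈ Set.Ico (0 : ℝ) 1)
    {Ω : Type*} [MeasurableSpace Ω] (P : Measure Ω) [IsProbabilityMeasure P]
    (X Y : Ω → Fin d → ℝ) (hXm : Measurable X) (hYm : Measurable Y)
    (hX1 : ∀ᵐ ω ∂P, euclNorm (X ω) ≤ 1) (hY1 : ∀ᵐ ω ∂P, euclNorm (Y ω) ≤ 1)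
    (hXY : IdentDistrib X Y P P)
    (p : ℕ) (hp : 1 ≤ p)
    (α : ℝ) (hα : α ∈ Set.Ioc 0 ((1 - γ) / (64 * p))) :
    ((1 - ((1 / 2 : ℝ) * α * p * (1 - γ)) • matExp P (fun ω => vecMulVec (X ω) (X ω)))
      - matExp P (fun ω =>
          ((1 - α • vecMulVec (X ω) (X ω - γ • Y ω))ᵀ
            * (1 - α • vecMulVec (X ω) (X ω - γ • Y ω))) ^ p)).PosSemidef :=
  stmt5_general γ hγ P X Y hXm hYm hX1 hY1 hXY p α hα
end
end

section
/- Assume Σ = E[X Xᵀ] is positive definite and let Ā = E[X (X − γY)ᵀ]. Then, in the Loewner order, Σ^{−1/2} Āᵀ Σ^{−1} Ā Σ^{−1/2} ≽ (1−γ)² I; equivalently, for every x ∈ ℝ^d, ‖Σ^{−1/2} Ā Σ^{−1/2} x‖ ≥ (1−γ)‖x‖. -/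
/-!
Whiten by `S = Σ^{1/2}`: with `C = E[X Yᵀ]` one has `S⁻¹ Ā S⁻¹ = I - γ M`, `M = S⁻¹ C S⁻¹`.
Because `Y` has the law of `X`, `2 aᵀ C b = E[2 (aᵀX)(bᵀY)] ≤ E[(aᵀX)²] + E[(bᵀY)²] = aᵀΣa + bᵀΣb`,
which after whitening reads `2 wᵀ M x ≤ ‖w‖² + ‖x‖²`; taking `w = M x` shows that `M` is a
contraction, hence `‖(I - γ M) x‖² ≥ (1 - γ)² ‖x‖²`. Both claims are this inequality, since
`Σ^{-1/2} Āᵀ Σ⁻¹ Ā Σ^{-1/2} = Bᵀ B` for `B = Σ^{-1/2} Ā Σ^{-1/2}`.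
-/

open MeasureTheory ProbabilityTheory Matrix
noncomputable section

/-- The `ℓ²`-operator norm of a real `d × d` matrix. -/
def opNorm {d : ℕ} (M : Matrix (Fin d) (Fin d) ℝ) : ℝ :=
  ‖Matrix.toEuclideanCLM (𝕜 := ℝ) M‖

/-- The square root of a positive semidefinite matrix, as `Matrix.PosSemidef.sqrt` was defined
in the older Mathlib (that declaration is gone). -/
def psdSqrt {d : ℕ} {A : Matrix (Fin d) (Fin d) ℝ} (hA : A.PosSemidef) : Matrix (Fin d) (Fin d) ℝ :=
  hA.1.eigenvectorUnitary.1 * diagonal ((↑) ∘ (Real.sqrt ∘ hA.1.eigenvalues)) *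
    (star hA.1.eigenvectorUnitary : Matrix (Fin d) (Fin d) ℝ)

section EuclNorm

variable {d : ℕ}

theorem euclNorm_eq_sqrt_dotProduct (u : Fin d → ℝ) : euclNorm u = √(u ⬝ᵥ u) := by
  simp only [euclNorm, dotProduct, sq]

theorem abs_le_euclNorm (u : Fin d → ℝ) (i : Fin d) : |u i| ≤ euclNorm u := by
  rw [euclNorm, ← Real.sqrt_sq_eq_abs]
  exact Real.sqrt_le_sqrt (Finset.single_le_sum (fun j _ => sq_nonneg (u j)) (Finset.mem_univ i))

theorem norm_le_euclNorm (u : Fin d → ℝ) : ‖u‖ ≤ euclNorm u :=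
  (pi_norm_le_iff_of_nonneg (Real.sqrt_nonneg _)).mpr fun i => (abs_le_euclNorm u i)

theorem mul_euclNorm_le_euclNorm {c : ℝ} (hc : 0 ≤ c) {x y : Fin d → ℝ}
    (h : c ^ 2 * (x ⬝ᵥ x) ≤ y ⬝ᵥ y) : c * euclNorm x ≤ euclNorm y := by
  rw [euclNorm_eq_sqrt_dotProduct, euclNorm_eq_sqrt_dotProduct, ← Real.sqrt_sq hc,
    ← Real.sqrt_mul (sq_nonneg c)]
  exact Real.sqrt_le_sqrt h

end EuclNorm

section SecondMoments

variable {Ω : Type*} [MeasurableSpace Ω] {P : Measure Ω} {d : ℕ}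

theorem memLp_of_euclNorm_le [IsFiniteMeasure P] {X : Ω → Fin d → ℝ}
    (hX : AEStronglyMeasurable X P) {C : ℝ} (hC : ∀ᵐ ω ∂P, euclNorm (X ω) ≤ C)
    (p : ENNReal) : MemLp X p P :=
  MemLp.of_bound hX C (hC.mono fun _ h => (norm_le_euclNorm _).trans h)

theorem memLp_dotProduct {X : Ω → Fin d → ℝ} {p : ENNReal} (hX : MemLp X p P) (a : Fin d → ℝ) :
    MemLp (fun ω => a ⬝ᵥ X ω) p P := by
  simp only [dotProduct]
  exact memLp_finsetSum _ fun i _ => (hX.eval i).const_mul (a i)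

theorem integrable_dotProduct_mul_dotProduct {X Z : Ω → Fin d → ℝ} (hX : MemLp X 2 P)
    (hZ : MemLp Z 2 P) (a b : Fin d → ℝ) :
    Integrable (fun ω => (a ⬝ᵥ X ω) * (b ⬝ᵥ Z ω)) P :=
  (memLp_dotProduct hX a).integrable_mul (memLp_dotProduct hZ b)

theorem dotProduct_matExp_vecMulVec_mulVec {X Z : Ω → Fin d → ℝ} (hX : MemLp X 2 P)
    (hZ : MemLp Z 2 P) (a b : Fin d → ℝ) :
    a ⬝ᵥ (matExp P (fun ω => vecMulVec (X ω) (Z ω)) *ᵥ b)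
      = ∫ ω, (a ⬝ᵥ X ω) * (b ⬝ᵥ Z ω) ∂P := by
  have hint : ∀ i j, Integrable (fun ω => a i * b j * (X ω i * Z ω j)) P := fun i j =>
    ((hX.eval i).integrable_mul (hZ.eval j)).const_mul _
  have hexpand : ∀ ω, (a ⬝ᵥ X ω) * (b ⬝ᵥ Z ω) = ∑ i, ∑ j, a i * b j * (X ω i * Z ω j) :=
    fun ω => by simp only [dotProduct, Finset.sum_mul_sum, mul_mul_mul_comm]
  simp_rw [hexpand]
  rw [integral_finsetSum _ fun i _ => integrable_finsetSum _ fun j _ => hint i j]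
  simp_rw [integral_finsetSum _ fun j _ => hint _ j, integral_const_mul]
  simp only [matExp, mulVec, dotProduct, of_apply, vecMulVec_apply, Finset.mul_sum]
  exact Finset.sum_congr rfl fun i _ => Finset.sum_congr rfl fun j _ => by ring

theorem matExp_sub_smul {M N : Ω → Matrix (Fin d) (Fin d) ℝ}
    (hM : ∀ i j, Integrable (fun ω => M ω i j) P) (hN : ∀ i j, Integrable (fun ω => N ω i j) P)
    (c : ℝ) : matExp P (fun ω => M ω - c • N ω) = matExp P M - c • matExp P N := by
  ext i j
  simp only [matExp, of_apply, Matrix.sub_apply, Matrix.smul_apply, smul_eq_mul]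
  rw [integral_sub (hM i j) ((hN i j).const_mul c), integral_const_mul]

theorem ProbabilityTheory.IdentDistrib.two_mul_dotProduct_matExp_vecMulVec_le
    [IsProbabilityMeasure P] {X Y : Ω → Fin d → ℝ} (hXY : IdentDistrib X Y P P)
    (hX : MemLp X 2 P) (a b : Fin d → ℝ) :
    2 * (a ⬝ᵥ (matExp P (fun ω => vecMulVec (X ω) (Y ω)) *ᵥ b))
      ≤ a ⬝ᵥ (matExp P (fun ω => vecMulVec (X ω) (X ω)) *ᵥ a)
        + b ⬝ᵥ (matExp P (fun ω => vecMulVec (X ω) (X ω)) *ᵥ b) := by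
  have hY := hXY.memLp_snd hX
  have hbY : ∫ ω, (b ⬝ᵥ Y ω) * (b ⬝ᵥ Y ω) ∂P = ∫ ω, (b ⬝ᵥ X ω) * (b ⬝ᵥ X ω) ∂P :=
    (hXY.comp (u := fun v => (b ⬝ᵥ v) * (b ⬝ᵥ v)) (by fun_prop)).integral_eq.symm
  rw [dotProduct_matExp_vecMulVec_mulVec hX hY, dotProduct_matExp_vecMulVec_mulVec hX hX,
    dotProduct_matExp_vecMulVec_mulVec hX hX, ← hbY, ← integral_const_mul,
    ← integral_add (integrable_dotProduct_mul_dotProduct hX hX a a)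
      (integrable_dotProduct_mul_dotProduct hY hY b b)]
  refine integral_mono ((integrable_dotProduct_mul_dotProduct hX hY a b).const_mul 2)
    ((integrable_dotProduct_mul_dotProduct hX hX a a).add
      (integrable_dotProduct_mul_dotProduct hY hY b b)) fun ω => ?_
  nlinarith [sq_nonneg (a ⬝ᵥ X ω - b ⬝ᵥ Y ω)]

end SecondMoments

section PsdSqrt

variable {d : ℕ} {A : Matrix (Fin d) (Fin d) ℝ}

theorem psdSqrt_mul_self (hA : A.PosSemidef) : psdSqrt hA * psdSqrt hA = A := by
  conv_rhs => rw [hA.1.spectral_theorem, Unitary.conjStarAlgAut_apply]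
  simp only [psdSqrt, Matrix.mul_assoc]
  rw [← Matrix.mul_assoc (star _ : Matrix (Fin d) (Fin d) ℝ) _,
    Matrix.UnitaryGroup.star_mul_self, Matrix.one_mul, ← Matrix.mul_assoc (diagonal _),
    diagonal_mul_diagonal]
  congr 3
  funext i
  simp [Real.mul_self_sqrt (hA.eigenvalues_nonneg i)]

theorem psdSqrt_transpose (hA : A.PosSemidef) : (psdSqrt hA)ᵀ = psdSqrt hA := by
  rw [psdSqrt, transpose_mul, transpose_mul, diagonal_transpose, Matrix.mul_assoc,
    ← conjTranspose_eq_transpose_of_trivial, ← conjTranspose_eq_transpose_of_trivial]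
  simp [Matrix.star_eq_conjTranspose]

theorem Matrix.PosDef.isUnit_det_psdSqrt (hA : A.PosDef) :
    IsUnit (psdSqrt hA.posSemidef).det := by
  refine isUnit_iff_ne_zero.mpr fun h => hA.det_pos.ne' ?_
  rw [← psdSqrt_mul_self hA.posSemidef, det_mul, h, zero_mul]

end PsdSqrt

namespace Matrix

variable {n : Type*} [Fintype n] [DecidableEq n]

theorem transpose_mul_self_sub_smul_one_posSemidef {B : Matrix n n ℝ} {c : ℝ}
    (h : ∀ x, c * (x ⬝ᵥ x) ≤ (B *ᵥ x) ⬝ᵥ (B *ᵥ x)) : (Bᵀ * B - c • 1).PosSemidef := by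
  refine posSemidef_iff_dotProduct_mulVec.mpr ⟨?_, fun x => ?_⟩
  · simp [IsHermitian, transpose_sub, transpose_mul]
  · have hform : x ⬝ᵥ ((Bᵀ * B - c • 1) *ᵥ x) = (B *ᵥ x) ⬝ᵥ (B *ᵥ x) - c * (x ⬝ᵥ x) := by
      rw [sub_mulVec, ← mulVec_mulVec, dotProduct_sub, dotProduct_mulVec, vecMul_transpose,
        smul_mulVec, one_mulVec, dotProduct_smul, smul_eq_mul, dotProduct_comm]
    simpa [hform] using h x

theorem dotProduct_mulVec_self_le_of_two_mul_le {Sig C S : Matrix n n ℝ} (hS : Sᵀ = S)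
    (hSdet : IsUnit S.det) (hSig : Sig = S * S)
    (hC : ∀ a b, 2 * (a ⬝ᵥ (C *ᵥ b)) ≤ a ⬝ᵥ (Sig *ᵥ a) + b ⬝ᵥ (Sig *ᵥ b)) (x : n → ℝ) :
    ((S⁻¹ * C * S⁻¹) *ᵥ x) ⬝ᵥ ((S⁻¹ * C * S⁻¹) *ᵥ x) ≤ x ⬝ᵥ x := by
  have hinv : S⁻¹ᵀ = S⁻¹ := by rw [transpose_nonsing_inv, hS]
  have hwhite : ∀ v, (S⁻¹ *ᵥ v) ⬝ᵥ (Sig *ᵥ (S⁻¹ *ᵥ v)) = v ⬝ᵥ v := fun v => by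
    rw [hSig, mulVec_mulVec, mul_assoc, mul_nonsing_inv S hSdet, mul_one, dotProduct_mulVec,
      ← mulVec_transpose, hS, mulVec_mulVec, mul_nonsing_inv S hSdet, one_mulVec]
  have hsym : ∀ w, w ⬝ᵥ ((S⁻¹ * C * S⁻¹) *ᵥ x) = (S⁻¹ *ᵥ w) ⬝ᵥ (C *ᵥ (S⁻¹ *ᵥ x)) := fun w => by
    rw [← mulVec_mulVec, ← mulVec_mulVec, dotProduct_mulVec, ← mulVec_transpose, hinv]
  -- whitening turns the bound on `C` into `2 w ⬝ᵥ M x ≤ w ⬝ᵥ w + x ⬝ᵥ x`; take `w = M x`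
  have := hC (S⁻¹ *ᵥ ((S⁻¹ * C * S⁻¹) *ᵥ x)) (S⁻¹ *ᵥ x)
  rw [hwhite, hwhite, ← hsym] at this
  linarith

theorem one_sub_sq_mul_dotProduct_self_le {M : Matrix n n ℝ}
    (hM : ∀ x, (M *ᵥ x) ⬝ᵥ (M *ᵥ x) ≤ x ⬝ᵥ x) {γ : ℝ} (hγ0 : 0 ≤ γ) (hγ1 : γ ≤ 1) (x : n → ℝ) :
    (1 - γ) ^ 2 * (x ⬝ᵥ x) ≤ ((1 - γ • M) *ᵥ x) ⬝ᵥ ((1 - γ • M) *ᵥ x) := by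
  have hexp : ((1 - γ • M) *ᵥ x) ⬝ᵥ ((1 - γ • M) *ᵥ x)
      = x ⬝ᵥ x - 2 * γ * (x ⬝ᵥ (M *ᵥ x)) + γ ^ 2 * ((M *ᵥ x) ⬝ᵥ (M *ᵥ x)) := by
    simp only [sub_mulVec, one_mulVec, smul_mulVec, dotProduct_sub, sub_dotProduct,
      dotProduct_smul, smul_dotProduct, smul_eq_mul, dotProduct_comm (M *ᵥ x) x]
    ring
  have hamgm : 2 * (x ⬝ᵥ (M *ᵥ x)) ≤ x ⬝ᵥ x + (M *ᵥ x) ⬝ᵥ (M *ᵥ x) := by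
    have := dotProduct_star_self_nonneg (x - M *ᵥ x)
    simp only [star_trivial, dotProduct_sub, sub_dotProduct, dotProduct_comm (M *ᵥ x) x] at this
    linarith
  rw [hexp]
  nlinarith [hM x, mul_nonneg hγ0 (sub_nonneg.mpr hγ1)]

end Matrix

theorem stmt16_general {d : ℕ} (γ : ℝ) (hγ : γ ∈ Set.Ico (0 : ℝ) 1)
    {Ω : Type*} [MeasurableSpace Ω] (P : Measure Ω) [IsProbabilityMeasure P]
    (X Y : Ω → Fin d → ℝ)
    (hX1 : ∀ᵐ ω ∂P, euclNorm (X ω) ≤ 1)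
    (hXY : IdentDistrib X Y P P)
    (Sig : Matrix (Fin d) (Fin d) ℝ)
    (hSig : Sig = matExp P (fun ω => vecMulVec (X ω) (X ω))) (hpd : Sig.PosDef)
    (Abar : Matrix (Fin d) (Fin d) ℝ)
    (hAbar : Abar = matExp P (fun ω => vecMulVec (X ω) (X ω - γ • Y ω))) :
    ((psdSqrt hpd.posSemidef)⁻¹ * Abarᵀ * Sig⁻¹ * Abar * (psdSqrt hpd.posSemidef)⁻¹
        - ((1 - γ) ^ 2) • (1 : Matrix (Fin d) (Fin d) ℝ)).PosSemidef ∧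
      ∀ x : Fin d → ℝ,
        (1 - γ) * euclNorm x
          ≤ euclNorm (((psdSqrt hpd.posSemidef)⁻¹ * Abar * (psdSqrt hpd.posSemidef)⁻¹).mulVec x) := by
  obtain ⟨hγ0, hγ1⟩ := hγ
  set S := psdSqrt hpd.posSemidef
  set C := matExp P (fun ω => vecMulVec (X ω) (Y ω))
  have hX : MemLp X 2 P := memLp_of_euclNorm_le hXY.aestronglyMeasurable_fst hX1 2
  have hY : MemLp Y 2 P := hXY.memLp_snd hX
  have hSS : Sig = S * S := (psdSqrt_mul_self hpd.posSemidef).symm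
  have hSt : Sᵀ = S := psdSqrt_transpose hpd.posSemidef
  have hSdet : IsUnit S.det := hpd.isUnit_det_psdSqrt
  have hAbar_eq : Abar = Sig - γ • C := by
    rw [hAbar, hSig]
    simp_rw [vecMulVec_sub, vecMulVec_smul]
    exact matExp_sub_smul (fun i j => (hX.eval i).integrable_mul (hX.eval j))
      (fun i j => (hX.eval i).integrable_mul (hY.eval j)) γ
  have hwhitened : S⁻¹ * Abar * S⁻¹ = 1 - γ • (S⁻¹ * C * S⁻¹) := by
    rw [hAbar_eq, hSS, Matrix.mul_sub, Matrix.sub_mul, ← Matrix.mul_assoc,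
      nonsing_inv_mul S hSdet, Matrix.one_mul, mul_nonsing_inv S hSdet, Matrix.mul_smul,
      Matrix.smul_mul]
  have hbound : ∀ x, (1 - γ) ^ 2 * (x ⬝ᵥ x)
      ≤ ((S⁻¹ * Abar * S⁻¹) *ᵥ x) ⬝ᵥ ((S⁻¹ * Abar * S⁻¹) *ᵥ x) := by
    rw [hwhitened]
    refine one_sub_sq_mul_dotProduct_self_le
      (dotProduct_mulVec_self_le_of_two_mul_le hSt hSdet hSS ?_) hγ0 hγ1.le
    rw [hSig]
    exact hXY.two_mul_dotProduct_matExp_vecMulVec_le hX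
  have hfactor :
      S⁻¹ * Abarᵀ * Sig⁻¹ * Abar * S⁻¹ = (S⁻¹ * Abar * S⁻¹)ᵀ * (S⁻¹ * Abar * S⁻¹) := by
    rw [hSS, Matrix.mul_inv_rev, transpose_mul, transpose_mul, transpose_nonsing_inv, hSt]
    simp only [Matrix.mul_assoc]
  refine ⟨hfactor ▸ transpose_mul_self_sub_smul_one_posSemidef hbound, fun x => ?_⟩
  exact mul_euclNorm_le_euclNorm (sub_nonneg.mpr hγ1.le) (hbound x)

/-- If `Σ = E[X Xᵀ]` is positive definite and `Ā = E[X (X - γY)ᵀ]`, then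
`Σ^{-1/2} Āᵀ Σ⁻¹ Ā Σ^{-1/2} ≽ (1-γ)² I` in the Loewner order; equivalently, for every `x`,
`‖Σ^{-1/2} Ā Σ^{-1/2} x‖ ≥ (1-γ)‖x‖`. -/
theorem stmt16 {d : ℕ} (hd : 1 ≤ d) (γ : ℝ) (hγ : γ ∈ Set.Ico (0 : ℝ) 1)
    {Ω : Type*} [MeasurableSpace Ω] (P : Measure Ω) [IsProbabilityMeasure P]
    (X Y : Ω → Fin d → ℝ) (hXm : Measurable X) (hYm : Measurable Y)
    (hX1 : ∀ᵐ ω ∂P, euclNorm (X ω) ≤ 1) (hY1 : ∀ᵐ ω ∂P, euclNorm (Y ω) ≤ 1)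
    (hXY : IdentDistrib X Y P P)
    (Sig : Matrix (Fin d) (Fin d) ℝ)
    (hSig : Sig = matExp P (fun ω => vecMulVec (X ω) (X ω))) (hpd : Sig.PosDef)
    (Abar : Matrix (Fin d) (Fin d) ℝ)
    (hAbar : Abar = matExp P (fun ω => vecMulVec (X ω) (X ω - γ • Y ω))) :
    ((psdSqrt hpd.posSemidef)⁻¹ * Abarᵀ * Sig⁻¹ * Abar * (psdSqrt hpd.posSemidef)⁻¹
        - ((1 - γ) ^ 2) • (1 : Matrix (Fin d) (Fin d) ℝ)).PosSemidef ∧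
      ∀ x : Fin d → ℝ,
        (1 - γ) * euclNorm x
          ≤ euclNorm (((psdSqrt hpd.posSemidef)⁻¹ * Abar * (psdSqrt hpd.posSemidef)⁻¹).mulVec x) :=
  stmt16_general γ hγ P X Y hX1 hXY Sig hSig hpd Abar hAbar
end
end
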